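/- For integers m even, m ≥ 2, and n odd, n ≥ 3, the Italian domination number of the directed Cartesian product C_m □ C_n equals m(n+1)/2. -/

import Mathlib

/-- Adjacency in the underlying (toroidal grid) graph of `C_m □ C_n`:
two vertices are joined iff they differ by `(±1,0)` or `(0,±1)`. -/
def Adj {m n : ℕ} (u v : ZMod m × ZMod n) : Prop :=
  v = u + (1, 0) ∨ v = u + (0, 1) ∨ u = v + (1, 0) ∨ u = v + (0, 1)

/-- A set of vertices is independent if no two of its members are adjacent. -/
def Indep {m n : ℕ} (S : Finset (ZMod m × ZMod n)) : Prop :=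
  ∀ u ∈ S, ∀ v ∈ S, ¬ Adj u v

/-- An Italian dominating function on the digraph `C_m □ C_n`
(arcs `(i,j) → (i+1,j)` and `(i,j) → (i,j+1)`): every vertex assigned `0`
has in-neighbour values summing to at least `2`. -/
def ItalianDF {m n : ℕ} (f : ZMod m × ZMod n → ℕ) : Prop :=
  (∀ v, f v ≤ 2) ∧ ∀ v, f v = 0 → 2 ≤ f (v.1 - 1, v.2) + f (v.1, v.2 - 1)

/-- The set of weights of Italian dominating functions on `C_m □ C_n`. -/
def weights (m n : ℕ) [NeZero m] [NeZero n] : Set ℕ :=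
  {w | ∃ f : ZMod m × ZMod n → ℕ, ItalianDF f ∧ ∑ v, f v = w}

/-!
Upper bound: put `1` on the column `j = 0` and, off that column, on one of the two checkerboard
colourings, alternating the colouring from row to row (possible as `m` is even). Every zero then
has both in-neighbours equal to `1`, and any two consecutive rows carry `n + 1` ones together.

Lower bound: let `b` be a row, `a` the row before it, and `ψ x = twosAfterNonzero x` the number
of entries `≥ 2` of a row `x` whose predecessor in the row is nonzero. A zero `b j` with
`b (j - 1) = 0` that does not count in `ψ a` forces `a (j - 1) = 0`, hence `b (j - 2) ≥ 2`; so
discharging from the nonzero entries of `b` to its zeros gives `n + 2 ψ b ≤ 2 ∑ b + ψ a`, and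
since `n` is odd, `n + 1 + 2 ψ b ≤ 2 ∑ b + 2 ψ a`. Summing over the rows, the `ψ` terms cancel:
`m (n + 1) ≤ 2 ∑ f`.
-/

open Finset

lemma sum_comp_sub_right {G M : Type*} [AddGroup G] [Fintype G] [AddCommMonoid M]
    (g : G → M) (c : G) : ∑ j, g (j - c) = ∑ j, g j :=
  (Equiv.subRight c).sum_comp g

lemma ZMod.val_sub_one_of_ne_zero {n : ℕ} [NeZero n] {j : ZMod n} (hj : j ≠ 0) :
    (j - 1).val = j.val - 1 := by
  have hpos : 1 ≤ j.val := ZMod.val_pos.2 hj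
  have hcast : j - 1 = ((j.val - 1 : ℕ) : ZMod n) := by
    rw [Nat.cast_sub hpos, ZMod.natCast_zmod_val, Nat.cast_one]
  rw [hcast, ZMod.val_cast_of_lt (by have := j.val_lt; omega)]

lemma card_mul_le_sum_of_le_add_sub_one {m : ℕ} [NeZero m] {c : ℕ} {g h : ZMod m → ℕ}
    (H : ∀ i, c + g i ≤ h i + g (i - 1)) : m * c ≤ ∑ i, h i := by
  have hsum := Finset.sum_le_sum fun i (_ : i ∈ univ) => H i
  simp only [sum_add_distrib, sum_comp_sub_right g, sum_const, card_univ, ZMod.card,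
    smul_eq_mul] at hsum
  omega

section Witness

variable {m n : ℕ} {ρ : ZMod m → ZMod 2}

def checkerboard (ρ : ZMod m → ZMod 2) : ZMod m × ZMod n → ℕ :=
  fun v => if v.2 = 0 ∨ ρ v.1 + (v.2.val : ZMod 2) = 1 then 1 else 0

lemma checkerboard_add_sub_one (hρ : ∀ i, ρ (i - 1) = ρ i + 1) (i : ZMod m) (j : ZMod n) :
    checkerboard ρ (i, j) + checkerboard ρ (i - 1, j) = 1 + if j = 0 then 1 else 0 := by
  by_cases hj : j = 0
  · simp [checkerboard, hj]
  · simp only [checkerboard, hρ, hj, false_or, if_false]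
    rw [add_right_comm (ρ i)]
    generalize ρ i + (j.val : ZMod 2) = y
    revert y
    decide

lemma two_mul_sum_checkerboard [NeZero m] [NeZero n] (hρ : ∀ i, ρ (i - 1) = ρ i + 1) :
    2 * ∑ v, checkerboard ρ (n := n) v = m * (n + 1) := by
  rw [Fintype.sum_prod_type, two_mul]
  nth_rw 2 [← sum_comp_sub_right _ 1]
  simp only [← sum_add_distrib, checkerboard_add_sub_one hρ]
  simp [sum_add_distrib, ZMod.card]

lemma italianDF_checkerboard [NeZero n] (hρ : ∀ i, ρ (i - 1) = ρ i + 1) :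
    ItalianDF (checkerboard ρ (n := n)) := by
  refine ⟨fun v => by unfold checkerboard; split_ifs <;> omega, fun ⟨i, j⟩ hv => ?_⟩
  simp only [checkerboard, ite_eq_right_iff, one_ne_zero, imp_false, not_or] at hv
  obtain ⟨hj, hij⟩ := hv
  have hij : ρ i + (j.val : ZMod 2) = 0 := by
    generalize ρ i + (j.val : ZMod 2) = y at hij
    revert y
    decide
  have hup : checkerboard ρ (i - 1, j) = 1 := by
    rw [checkerboard, if_pos (Or.inr ?_)]
    rw [hρ, add_right_comm, hij, zero_add]
  have hleft : checkerboard ρ (i, j - 1) = 1 := by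
    rw [checkerboard, if_pos]
    by_cases hj1 : j - 1 = 0
    · exact Or.inl hj1
    · right
      have hval : (j - 1).val + 1 = j.val := by
        rw [ZMod.val_sub_one_of_ne_zero hj]; have := ZMod.val_pos.2 hj; omega
      rw [← hval, Nat.cast_add, Nat.cast_one, ← add_assoc, add_eq_zero_iff_eq_neg] at hij
      rw [hij]
      rfl
  simp [hup, hleft]

end Witness

section Discharging

variable {n : ℕ} (b : ZMod n → ℕ)

def twosAfterNonzero [NeZero n] (x : ZMod n → ℕ) : ℕ := #{j | 2 ≤ x j ∧ x (j - 1) ≠ 0}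

/- Discharging within a row `b`: `transferₖ b j` is a unit sent from `j` to `j + k`. A nonzero
entry sends one unit to a zero right after it, and an entry `≥ 2` followed by two zeros sends one
unit to the second zero, from itself if it is preceded by a zero and otherwise from its nonzero
predecessor. -/
def transfer₁ (j : ZMod n) : ℕ := if b j ≠ 0 ∧ b (j + 1) = 0 then 1 else 0

def transfer₂ (j : ZMod n) : ℕ :=
  if b (j - 1) = 0 ∧ 2 ≤ b j ∧ b (j + 1) = 0 ∧ b (j + 2) = 0 then 1 else 0

def transfer₃ (j : ZMod n) : ℕ :=
  if b j ≠ 0 ∧ 2 ≤ b (j + 1) ∧ b (j + 2) = 0 ∧ b (j + 3) = 0 then 1 else 0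

def outflow (j : ZMod n) : ℕ := transfer₁ b j + transfer₂ b j + transfer₃ b j

def inflow (j : ZMod n) : ℕ :=
  transfer₁ b (j - 1) + transfer₂ b (j - 2) + transfer₃ b (j - 3)

lemma sum_inflow [NeZero n] : ∑ j, inflow b j = ∑ j, outflow b j := by
  simp only [inflow, outflow, sum_add_distrib, sum_comp_sub_right]

lemma outflow_eq_zero {j : ZMod n} (hj : b j = 0) : outflow b j = 0 := by
  simp [outflow, transfer₁, transfer₂, transfer₃, hj]

lemma add_outflow_le {j : ZMod n} (hj : b j ≠ 0) :
    1 + 2 * (if 2 ≤ b j ∧ b (j - 1) ≠ 0 then 1 else 0) + outflow b j ≤ 2 * b j := by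
  unfold outflow transfer₁ transfer₂ transfer₃
  split_ifs <;> omega

lemma one_le_inflow {a : ZMod n → ℕ} (hdom : ∀ k, b k = 0 → 2 ≤ a k + b (k - 1))
    {j : ZMod n} (hj : b j = 0) (ha : ¬(2 ≤ a j ∧ a (j - 1) ≠ 0)) : 1 ≤ inflow b j := by
  have e₁ : j - 1 + 1 = j := sub_add_cancel j 1
  have e₂ : j - 2 - 1 = j - 3 := by ring
  have e₃ : j - 2 + 1 = j - 1 := by ring
  have e₄ : j - 2 + 2 = j := sub_add_cancel j 2
  have e₅ : j - 3 + 1 = j - 2 := by ring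
  have e₆ : j - 3 + 2 = j - 1 := by ring
  have e₇ : j - 3 + 3 = j := sub_add_cancel j 3
  by_cases hprev : b (j - 1) = 0
  · have haj : 2 ≤ a j := by simpa [hprev] using hdom j hj
    have haprev : a (j - 1) = 0 := by tauto
    have htwo : 2 ≤ b (j - 2) := by
      simpa [haprev, show j - 1 - 1 = j - 2 by ring] using hdom (j - 1) hprev
    unfold inflow transfer₂ transfer₃
    rw [e₂, e₃, e₄, e₅, e₆, e₇]
    split_ifs <;> omega
  · unfold inflow transfer₁
    rw [e₁, if_pos ⟨hprev, hj⟩]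
    omega

lemma add_two_mul_twosAfterNonzero_le [NeZero n] {a : ZMod n → ℕ}
    (hdom : ∀ k, b k = 0 → 2 ≤ a k + b (k - 1)) :
    n + 2 * twosAfterNonzero b ≤ 2 * ∑ j, b j + twosAfterNonzero a := by
  have hpoint : ∀ j, 1 + 2 * (if 2 ≤ b j ∧ b (j - 1) ≠ 0 then 1 else 0) + outflow b j ≤
      2 * b j + (if 2 ≤ a j ∧ a (j - 1) ≠ 0 then 1 else 0) + inflow b j := by
    intro j
    by_cases hj : b j = 0
    · rw [outflow_eq_zero b hj, if_neg (by omega), hj]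
      split_ifs with ha
      · omega
      · have := one_le_inflow b hdom hj ha
        omega
    · have := add_outflow_le b hj
      omega
  have hsum := Finset.sum_le_sum fun j (_ : j ∈ univ) => hpoint j
  simp only [sum_add_distrib, ← mul_sum, sum_const, card_univ, ZMod.card, smul_eq_mul,
    mul_one, sum_inflow] at hsum
  simp only [twosAfterNonzero, card_filter]
  omega

end Discharging

lemma succ_add_two_mul_twosAfterNonzero_le {n : ℕ} [NeZero n] (hn : Odd n)
    {a b : ZMod n → ℕ} (hdom : ∀ k, b k = 0 → 2 ≤ a k + b (k - 1)) :
    n + 1 + 2 * twosAfterNonzero b ≤ 2 * ∑ j, b j + 2 * twosAfterNonzero a := by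
  have := add_two_mul_twosAfterNonzero_le b hdom
  obtain ⟨k, rfl⟩ := hn
  omega

lemma ItalianDF.mul_succ_le_two_mul_sum {m n : ℕ} [NeZero m] [NeZero n] (hn : Odd n)
    {f : ZMod m × ZMod n → ℕ} (hf : ItalianDF f) : m * (n + 1) ≤ 2 * ∑ v, f v := by
  rw [Fintype.sum_prod_type, mul_sum]
  exact card_mul_le_sum_of_le_add_sub_one fun i =>
    succ_add_two_mul_twosAfterNonzero_le hn fun j => hf.2 (i, j)

theorem stmt7_general (m n : ℕ) [NeZero m] [NeZero n]
    (hme : Even m) (hno : Odd n) :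
    IsLeast (weights m n) (m * (n + 1) / 2) := by
  constructor
  · set ρ := ZMod.castHom hme.two_dvd (ZMod 2)
    have hρ : ∀ i, ρ (i - 1) = ρ i + 1 := fun i => by
      rw [map_sub, map_one, sub_eq_add_neg, ZMod.neg_eq_self_mod_two]
    have := two_mul_sum_checkerboard hρ (n := n)
    exact ⟨checkerboard ρ, italianDF_checkerboard hρ, by omega⟩
  · rintro w ⟨f, hf, rfl⟩
    have := hf.mul_succ_le_two_mul_sum hno
    omega

theorem stmt7 (m n : ℕ) [NeZero m] [NeZero n] (hm : 2 ≤ m) (hn : 3 ≤ n)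
    (hme : Even m) (hno : Odd n) :
    IsLeast (weights m n) (m * (n + 1) / 2) :=
  stmt7_general m n hme hno
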